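/- arXiv:2206.13180 — 6 statements merged into one kernel-verified Lean document; each statement's English description precedes it below -/
import Mathlib

section
/- Let λ₁,…,λₙ (n ≥ 2) be nonnegative reals with Σᵢ λᵢ² = 1. Define the normalized tangle T̃ = (n/(n-1))(1 - Σᵢ λᵢ⁴) and normalized Schmidt number K̃ = (1/(n-1))((Σᵢ λᵢ⁴)⁻¹ - 1). Then K̃ ≤ T̃. -/
open Finset

theorem normalized_schmidt_le_tangle (n : ℕ) (hn : 2 ≤ n) (l : Fin n → ℝ)
    (hl : ∀ i, 0 ≤ l i) (hsum : ∑ i, (l i) ^ 2 = 1) :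
    (1 / ((n : ℝ) - 1)) * ((∑ i, (l i) ^ 4)⁻¹ - 1) ≤
      ((n : ℝ) / ((n : ℝ) - 1)) * (1 - ∑ i, (l i) ^ 4) := by
  set p : ℝ := ∑ i, (l i) ^ 4 with hp
  have hn1 : (1 : ℝ) ≤ (n : ℝ) := by exact_mod_cast Nat.one_le_of_lt hn
  have hn2 : (0 : ℝ) < (n : ℝ) - 1 := by
    have : (2 : ℝ) ≤ (n : ℝ) := by exact_mod_cast hn
    linarith
  have hlow : 1 ≤ (n : ℝ) * p := by
    have h := sq_sum_le_card_mul_sum_sq (s := Finset.univ) (f := fun i => (l i) ^ 2)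
    simp only [Finset.card_univ, Fintype.card_fin] at h
    calc (1 : ℝ) = (∑ i, (l i) ^ 2) ^ 2 := by rw [hsum]; ring
      _ ≤ (n : ℝ) * ∑ i, ((l i) ^ 2) ^ 2 := by exact_mod_cast h
      _ = (n : ℝ) * p := by rw [hp]; ring_nf
  have hpos : 0 < p := by nlinarith
  have hle1 : p ≤ 1 := by
    have h1 : ∀ i, (l i) ^ 2 ≤ 1 := by
      intro i
      have h := Finset.single_le_sum (f := fun i => (l i) ^ 2)
        (fun j _ => sq_nonneg (l j)) (Finset.mem_univ i)
      simpa [hsum] using h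
    have : ∀ i ∈ Finset.univ, (l i) ^ 4 ≤ (l i) ^ 2 := by
      intro i _
      nlinarith [sq_nonneg (l i), h1 i]
    calc p ≤ ∑ i, (l i) ^ 2 := Finset.sum_le_sum this
      _ = 1 := hsum
  -- key: (1-p)*(1/p - n) ≤ 0, i.e. 1/p - 1 ≤ n(1-p)
  have hinv : p⁻¹ ≤ (n : ℝ) := by
    rw [inv_le_iff_one_le_mul₀ hpos]
    linarith [hlow]
  have key : p⁻¹ - 1 ≤ (n : ℝ) * (1 - p) := by
    have h1 : p⁻¹ - 1 = (1 - p) * p⁻¹ := by field_simp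
    rw [h1]
    have h2 : (1 - p) * p⁻¹ ≤ (1 - p) * (n : ℝ) :=
      mul_le_mul_of_nonneg_left hinv (by linarith)
    linarith
  rw [div_mul_eq_mul_div, div_mul_eq_mul_div, div_le_div_iff₀ hn2 hn2]
  nlinarith [key, hn2]
end

section
/- Let λ₁,…,λₙ (n ≥ 2) be nonnegative reals with Σᵢ λᵢ² = 1. Define the normalized robustness R̃ = ((Σᵢ λᵢ)² - 1)/(n-1) and normalized concurrence C̃ = √((n/(n-1))(1 - Σᵢ λᵢ⁴)). Then R̃ ≤ C̃. -/
/-!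
Writing `S = ∑ λᵢ²` and `T = ∑ λᵢ⁴`, the numerator `(∑ λᵢ)² - S` of `R̃` is the sum of the
`n(n-1)` off-diagonal products `λᵢλⱼ`, whose squares sum to `S² - T`. Cauchy–Schwarz over the
off-diagonal pairs gives `((∑ λᵢ)² - 1)² ≤ n(n-1)(1 - T)`, i.e. `R̃² ≤ C̃²`.
-/

open Finset

section OffDiag

variable {ι : Type*} [Fintype ι] [DecidableEq ι]

theorem sum_offDiag_mul_eq_sq_sum_sub_sum_sq {R : Type*} [CommRing R] (f : ι → R) :
    ∑ p ∈ (univ : Finset ι).offDiag, f p.1 * f p.2 = (∑ i, f i) ^ 2 - ∑ i, f i ^ 2 := by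
  have hdiag : ∑ p ∈ (univ : Finset ι).diag, f p.1 * f p.2 = ∑ i, f i ^ 2 := by
    simp only [sum_diag, sq]
  have hprod : ∑ p ∈ (univ : Finset ι) ×ˢ univ, f p.1 * f p.2 = (∑ i, f i) ^ 2 := by
    rw [sum_product, sq, sum_mul_sum]
  rw [← hdiag, ← hprod, ← diag_union_offDiag, sum_union (disjoint_diag_offDiag _)]
  ring

theorem sq_sq_sum_sub_sum_sq_le (f : ι → ℝ) :
    ((∑ i, f i) ^ 2 - ∑ i, f i ^ 2) ^ 2 ≤
      (Fintype.card ι * (Fintype.card ι - 1)) * ((∑ i, f i ^ 2) ^ 2 - ∑ i, f i ^ 4) := by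
  have hcard : (#(univ : Finset ι).offDiag : ℝ) = Fintype.card ι * (Fintype.card ι - 1) := by
    rw [offDiag_card, card_univ, Nat.cast_sub (Nat.le_mul_self _)]
    push_cast
    ring
  have hsq : ∑ p ∈ (univ : Finset ι).offDiag, (f p.1 * f p.2) ^ 2
      = (∑ i, f i ^ 2) ^ 2 - ∑ i, f i ^ 4 := by
    simp_rw [mul_pow, sum_offDiag_mul_eq_sq_sum_sub_sum_sq (fun i => f i ^ 2), ← pow_mul]
  rw [← hcard, ← hsq, ← sum_offDiag_mul_eq_sq_sum_sub_sum_sq]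
  exact sq_sum_le_card_mul_sum_sq

end OffDiag

theorem div_sub_one_le_sqrt_of_sq_le {x d N : ℝ} (h : x ^ 2 ≤ N * (N - 1) * d) :
    x / (N - 1) ≤ Real.sqrt (N / (N - 1) * d) := by
  refine (le_abs_self _).trans (Real.abs_le_sqrt ?_)
  rcases eq_or_ne (N - 1) 0 with hN | hN
  · simp [hN]
  · rw [div_pow, div_le_iff₀ (sq_pos_of_ne_zero hN)]
    calc x ^ 2 ≤ N * (N - 1) * d := h
      _ = N / (N - 1) * d * (N - 1) ^ 2 := by field_simp

theorem robustness_le_concurrence_general (n : ℕ) (l : Fin n → ℝ)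
    (hsum : ∑ i, (l i) ^ 2 = 1) :
    ((∑ i, l i) ^ 2 - 1) / ((n : ℝ) - 1) ≤
      Real.sqrt (((n : ℝ) / ((n : ℝ) - 1)) * (1 - ∑ i, (l i) ^ 4)) := by
  apply div_sub_one_le_sqrt_of_sq_le
  simpa [hsum] using sq_sq_sum_sub_sum_sq_le l

theorem robustness_le_concurrence (n : ℕ) (hn : 2 ≤ n) (l : Fin n → ℝ)
    (hl : ∀ i, 0 ≤ l i) (hsum : ∑ i, (l i) ^ 2 = 1) :
    ((∑ i, l i) ^ 2 - 1) / ((n : ℝ) - 1) ≤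
      Real.sqrt (((n : ℝ) / ((n : ℝ) - 1)) * (1 - ∑ i, (l i) ^ 4)) :=
  robustness_le_concurrence_general n l hsum
end

section
/- Let λ₁,…,λₙ be nonnegative reals with Σᵢ λᵢ² = 1. Then (Σᵢ λᵢ)² · (Σᵢ λᵢ⁴) ≥ (Σᵢ λᵢ²)³ = 1. -/
open Finset

theorem sq_sum_mul_sum_fourth_ge_one (n : ℕ) (hn : 1 ≤ n) (l : Fin n → ℝ)
    (hl : ∀ i, 0 ≤ l i) (hsum : ∑ i, (l i) ^ 2 = 1) :
    (1 : ℝ) ≤ (∑ i, l i) ^ 2 * ∑ i, (l i) ^ 4 := by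
  have h1 : (∑ i, Real.sqrt (l i) * (l i * Real.sqrt (l i))) ^ 2 ≤
      (∑ i, Real.sqrt (l i) ^ 2) * ∑ i, (l i * Real.sqrt (l i)) ^ 2 :=
    Finset.sum_mul_sq_le_sq_mul_sq _ _ _
  have e1 : ∀ i, Real.sqrt (l i) * (l i * Real.sqrt (l i)) = l i ^ 2 := by
    intro i
    have := Real.sq_sqrt (hl i)
    nlinarith [Real.sqrt_nonneg (l i)]
  have e2 : ∀ i, Real.sqrt (l i) ^ 2 = l i := fun i => Real.sq_sqrt (hl i)
  have e3 : ∀ i, (l i * Real.sqrt (l i)) ^ 2 = l i ^ 3 := by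
    intro i
    rw [mul_pow, Real.sq_sqrt (hl i)]
    ring
  simp_rw [e1, e2, e3] at h1
  rw [hsum] at h1
  -- h1 : 1 ≤ (∑ l i) * (∑ l i ^ 3)
  have h2 : (∑ i, l i * l i ^ 2) ^ 2 ≤ (∑ i, l i ^ 2) * ∑ i, (l i ^ 2) ^ 2 :=
    Finset.sum_mul_sq_le_sq_mul_sq _ _ _
  have e4 : ∀ i, l i * l i ^ 2 = l i ^ 3 := fun i => by ring
  have e5 : ∀ i, (l i ^ 2) ^ 2 = l i ^ 4 := fun i => by ring
  simp_rw [e4, e5, hsum, one_mul] at h2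
  have hA : (0:ℝ) ≤ ∑ i, l i := Finset.sum_nonneg fun i _ => hl i
  have hC : (0:ℝ) ≤ ∑ i, l i ^ 3 := Finset.sum_nonneg fun i _ => pow_nonneg (hl i) 3
  nlinarith [sq_nonneg (∑ i, l i), sq_nonneg (∑ i, l i ^ 3)]
end

section
/- Let λ₁,…,λₙ (n ≥ 2) be nonnegative reals with Σᵢ λᵢ² = 1. Define normalized robustness R̃ = ((Σᵢ λᵢ)² - 1)/(n-1) and normalized Schmidt number K̃ = ((Σᵢ λᵢ⁴)⁻¹ - 1)/(n-1). Then K̃ ≤ R̃. -/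
open Finset

theorem normalized_schmidt_le_robustness (n : ℕ) (hn : 2 ≤ n) (l : Fin n → ℝ)
    (hl : ∀ i, 0 ≤ l i) (hsum : ∑ i, (l i) ^ 2 = 1) :
    ((∑ i, (l i) ^ 4)⁻¹ - 1) / ((n : ℝ) - 1) ≤
      ((∑ i, l i) ^ 2 - 1) / ((n : ℝ) - 1) := by
  have hden : (0:ℝ) < (n:ℝ) - 1 := by
    have : (2:ℝ) ≤ n := by exact_mod_cast hn
    linarith
  have hA : 0 ≤ ∑ i, l i := Finset.sum_nonneg fun i _ => hl i
  -- Cauchy-Schwarz 1: (∑ l²)² ≤ (∑ l³)(∑ l), via f = l·√l, g = √l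
  have h1 : (∑ i, (l i)^2)^2 ≤ (∑ i, (l i)^3) * (∑ i, l i) := by
    have := Finset.sum_mul_sq_le_sq_mul_sq Finset.univ
      (fun i => l i * Real.sqrt (l i)) (fun i => Real.sqrt (l i))
    simpa [mul_assoc, Real.mul_self_sqrt (hl _), mul_pow,
      Real.sq_sqrt (hl _), pow_succ, mul_comm, mul_left_comm] using this
  -- Cauchy-Schwarz 2: (∑ l³)² ≤ (∑ l⁴)(∑ l²)
  have h2 : (∑ i, (l i)^3)^2 ≤ (∑ i, (l i)^4) * (∑ i, (l i)^2) := by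
    have := Finset.sum_mul_sq_le_sq_mul_sq Finset.univ
      (fun i => (l i)^2) (fun i => l i)
    simpa [mul_pow, ← pow_mul, mul_comm, show ∀ x:ℝ, x * x^2 = x^3 from fun x => by ring] using this
  rw [hsum] at h1 h2
  have hB : 0 < ∑ i, (l i)^3 := by nlinarith
  have hC : 0 < ∑ i, (l i)^4 := by nlinarith
  have key : (∑ i, (l i)^4)⁻¹ ≤ (∑ i, l i)^2 := by
    rw [inv_le_iff_one_le_mul₀ hC]
    nlinarith [sq_nonneg (∑ i, l i), sq_nonneg (∑ i, (l i)^3)]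
  exact div_le_div_of_nonneg_right (by linarith) hden.le
end

section
/- The normalized tangle and normalized robustness are not partially ordered: there exist sets of Schmidt coefficients (λ₁,λ₂,λ₃) with λᵢ ≥ 0 and Σλᵢ² = 1 such that R̃ > T̃, and other such sets with R̃ < T̃. Concretely, with n = 3, λ = (cos(π/16), sin(π/16), 0) gives R̃ > T̃, while λ = (cos(π/4), sin(π/4), 0) gives R̃ < T̃. -/
open Finset Real

noncomputable def Rnorm (l : Fin 3 → ℝ) : ℝ := ((∑ i, l i) ^ 2 - 1) / 2

noncomputable def Tnorm (l : Fin 3 → ℝ) : ℝ := (3 / 2) * (1 - ∑ i, (l i) ^ 4)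

theorem tangle_robustness_not_ordered :
    (∃ l : Fin 3 → ℝ, (∀ i, 0 ≤ l i) ∧ (∑ i, (l i) ^ 2 = 1) ∧ Tnorm l < Rnorm l) ∧
    (∃ l : Fin 3 → ℝ, (∀ i, 0 ≤ l i) ∧ (∑ i, (l i) ^ 2 = 1) ∧ Rnorm l < Tnorm l) ∧
    (Tnorm ![Real.cos (π / 16), Real.sin (π / 16), 0] <
      Rnorm ![Real.cos (π / 16), Real.sin (π / 16), 0]) ∧
    (Rnorm ![Real.cos (π / 4), Real.sin (π / 4), 0] <
      Tnorm ![Real.cos (π / 4), Real.sin (π / 4), 0]) := by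
  have hpi := Real.pi_pos
  have hpilt := Real.pi_lt_d2
  -- facts at π/16
  have hc : 0 < Real.cos (π / 16) := by
    apply Real.cos_pos_of_mem_Ioo
    constructor <;> [linarith; linarith]
  have hs : 0 < Real.sin (π / 16) := by
    apply Real.sin_pos_of_pos_of_lt_pi <;> linarith
  have hpy : Real.sin (π / 16) ^ 2 + Real.cos (π / 16) ^ 2 = 1 :=
    Real.sin_sq_add_cos_sq _
  have hsmall : Real.sin (π / 16) * Real.cos (π / 16) < 1 / 3 := by
    have h2 : Real.sin (π / 8) = 2 * Real.sin (π / 16) * Real.cos (π / 16) := by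
      rw [show (π / 8 : ℝ) = 2 * (π / 16) by ring, Real.sin_two_mul]
    have h3 : Real.sin (π / 8) < π / 8 := Real.sin_lt (by linarith)
    nlinarith
  have h16 : Tnorm ![Real.cos (π / 16), Real.sin (π / 16), 0] <
      Rnorm ![Real.cos (π / 16), Real.sin (π / 16), 0] := by
    simp only [Tnorm, Rnorm, Fin.sum_univ_three, Matrix.cons_val_zero,
      Matrix.cons_val_one, Matrix.head_cons, Matrix.cons_val_two, Matrix.tail_cons]
    nlinarith [mul_pos hs hc]
  -- facts at π/4
  have hc4 : Real.cos (π / 4) = Real.sqrt 2 / 2 := Real.cos_pi_div_four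
  have hs4 : Real.sin (π / 4) = Real.sqrt 2 / 2 := Real.sin_pi_div_four
  have hsq : Real.sqrt 2 ^ 2 = 2 := Real.sq_sqrt (by norm_num)
  have h4 : Rnorm ![Real.cos (π / 4), Real.sin (π / 4), 0] <
      Tnorm ![Real.cos (π / 4), Real.sin (π / 4), 0] := by
    simp only [Rnorm, Tnorm, Fin.sum_univ_three, Matrix.cons_val_zero,
      Matrix.cons_val_one, Matrix.head_cons, Matrix.cons_val_two, Matrix.tail_cons,
      hc4, hs4]
    nlinarith
  refine ⟨⟨_, ?_, ?_, h16⟩, ⟨_, ?_, ?_, h4⟩, h16, h4⟩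
  · intro i; fin_cases i <;> simp <;> positivity
  · simp only [Fin.sum_univ_three, Matrix.cons_val_zero, Matrix.cons_val_one,
      Matrix.head_cons, Matrix.cons_val_two, Matrix.tail_cons]
    nlinarith
  · intro i; fin_cases i <;> simp [hc4, hs4] <;> positivity
  · simp only [Fin.sum_univ_three, Matrix.cons_val_zero, Matrix.cons_val_one,
      Matrix.head_cons, Matrix.cons_val_two, Matrix.tail_cons, hc4, hs4]
    nlinarith
end

section
/- Let α = Σᵢ λᵢ (φᵢ ⊗ ψᵢ) be a Schmidt decomposition (λᵢ ≥ 0 sorted in descending order, Σλᵢ² = 1, {φᵢ},{ψᵢ} orthonormal). If for all self-adjoint A on H₁ and B on H₂ one has ⟨α,(A⊗B)α⟩ = ⟨α,(A⊗I)α⟩⟨α,(I⊗B)α⟩, then λ₁ = 1 and λᵢ = 0 for i > 1; hence α = φ₁ ⊗ ψ₁ is separable. -/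
open scoped TensorProduct
open Finset

variable {H₁ H₂ : Type*} [NormedAddCommGroup H₁] [InnerProductSpace ℂ H₁]
  [NormedAddCommGroup H₂] [InnerProductSpace ℂ H₂]

/-- The linear functional `x ↦ ⟪u ⊗ v, x⟫` on `H₁ ⊗ H₂`, where the inner product on the
tensor product is determined by `⟪a ⊗ b, c ⊗ d⟫ = ⟪a,c⟫⟪b,d⟫`. -/
noncomputable def braPure (u : H₁) (v : H₂) : H₁ ⊗[ℂ] H₂ →ₗ[ℂ] ℂ :=
  TensorProduct.lift ((LinearMap.mul ℂ ℂ).compl₁₂ (innerₛₗ ℂ u) (innerₛₗ ℂ v))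

/-- The bra functional `⟪α, ·⟫` for `α = ∑ i, c i • (φ i ⊗ ψ i)` with real coefficients. -/
noncomputable def braSchmidt {n : ℕ} (c : Fin n → ℝ) (φ : Fin n → H₁) (ψ : Fin n → H₂) :
    H₁ ⊗[ℂ] H₂ →ₗ[ℂ] ℂ :=
  ∑ i, (c i : ℂ) • braPure (φ i) (ψ i)

/-! Test independence on the projections `A = |φ₀⟩⟨φ₀|`, `B = |ψ₀⟩⟨ψ₀|`: `A ⊗ B`, `A ⊗ 1` and
`1 ⊗ B` all send `α` to `λ₀ (φ₀ ⊗ ψ₀)`, so independence reads `λ₀² = λ₀⁴`. As the largest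
Schmidt coefficient, `λ₀ > 0`, hence `λ₀ = 1`, and `∑ λᵢ² = 1` forces the other coefficients
to vanish. -/

open InnerProductSpace

section RankOne

variable {𝕜 E F ι : Type*} [RCLike 𝕜] [NormedAddCommGroup E] [InnerProductSpace 𝕜 E]
  [NormedAddCommGroup F] [InnerProductSpace 𝕜 F] [Fintype ι]
  {v : ι → E} {w : ι → F}

omit [Fintype ι] in
theorem Orthonormal.rankOne_self_apply [DecidableEq ι] (hv : Orthonormal 𝕜 v) (k i : ι) :
    rankOne 𝕜 (v k) (v k) (v i) = if i = k then v k else 0 := by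
  rw [rankOne_apply, orthonormal_iff_ite.mp hv k i]
  split_ifs <;> simp_all

theorem TensorProduct.map_sum_smul_tmul (A : E →ₗ[𝕜] E) (B : F →ₗ[𝕜] F) (a : ι → 𝕜) :
    TensorProduct.map A B (∑ i, a i • (v i ⊗ₜ[𝕜] w i)) = ∑ i, a i • (A (v i) ⊗ₜ[𝕜] B (w i)) := by
  simp only [map_sum, map_smul, TensorProduct.map_tmul]

theorem Orthonormal.map_rankOne_left_sum_smul_tmul [DecidableEq ι] (hv : Orthonormal 𝕜 v) (k : ι)
    (B : F →ₗ[𝕜] F) (a : ι → 𝕜) :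
    TensorProduct.map (rankOne 𝕜 (v k) (v k) : E →ₗ[𝕜] E) B (∑ i, a i • (v i ⊗ₜ[𝕜] w i)) =
      a k • (v k ⊗ₜ[𝕜] B (w k)) := by
  rw [TensorProduct.map_sum_smul_tmul, Fintype.sum_eq_single k fun i hi => by
    simp [hv.rankOne_self_apply, hi]]
  simp [hv.rankOne_self_apply]

theorem Orthonormal.map_rankOne_right_sum_smul_tmul [DecidableEq ι] (hw : Orthonormal 𝕜 w)
    (k : ι) (A : E →ₗ[𝕜] E) (a : ι → 𝕜) :
    TensorProduct.map A (rankOne 𝕜 (w k) (w k) : F →ₗ[𝕜] F) (∑ i, a i • (v i ⊗ₜ[𝕜] w i)) =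
      a k • (A (v k) ⊗ₜ[𝕜] w k) := by
  rw [TensorProduct.map_sum_smul_tmul, Fintype.sum_eq_single k fun i hi => by
    simp [hw.rankOne_self_apply, hi]]
  simp [hw.rankOne_self_apply]

end RankOne

theorem braSchmidt_tmul_self {n : ℕ} {φ : Fin n → H₁} {ψ : Fin n → H₂}
    (hφ : Orthonormal ℂ φ) (hψ : Orthonormal ℂ ψ) (c : Fin n → ℝ) (k : Fin n) :
    braSchmidt c φ ψ (φ k ⊗ₜ[ℂ] ψ k) = c k := by
  simp [braSchmidt, braPure, orthonormal_iff_ite.mp hφ, orthonormal_iff_ite.mp hψ]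

theorem zero_lt_apply_zero_of_antitone {n : ℕ} {c : Fin (n + 1) → ℝ} (hc : ∀ i, 0 ≤ c i)
    (hanti : Antitone c) (hnorm : ∑ i, c i ^ 2 = 1) : 0 < c 0 := by
  by_contra! h
  have hzero (i : Fin (n + 1)) : c i = 0 := le_antisymm ((hanti (Fin.zero_le i)).trans h) (hc i)
  simp [hzero] at hnorm

theorem eq_zero_of_sum_sq_eq_one_of_sq_eq_one {ι : Type*} [Fintype ι] {c : ι → ℝ}
    (hnorm : ∑ i, c i ^ 2 = 1) {j : ι} (hj : c j ^ 2 = 1) {i : ι} (hij : i ≠ j) : c i = 0 := by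
  classical
  have hrest : ∑ k ∈ Finset.univ.erase j, c k ^ 2 = 0 := by
    rw [← Finset.add_sum_erase _ _ (Finset.mem_univ j), hj] at hnorm
    linarith
  rw [Finset.sum_eq_zero_iff_of_nonneg fun k _ => sq_nonneg (c k)] at hrest
  exact pow_eq_zero_iff two_ne_zero |>.mp <|
    hrest i (Finset.mem_erase.mpr ⟨hij, Finset.mem_univ i⟩)

theorem independence_implies_separable_general
    {n : ℕ} (φ : Fin (n + 1) → H₁) (ψ : Fin (n + 1) → H₂)
    (hφ : Orthonormal ℂ φ) (hψ : Orthonormal ℂ ψ)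
    (c : Fin (n + 1) → ℝ) (hc : ∀ i, 0 ≤ c i)
    (hdesc : ∀ i j : Fin (n + 1), i ≤ j → c j ≤ c i)
    (hnorm : ∑ i, (c i) ^ 2 = 1)
    (hindep : ∀ (A : H₁ →ₗ[ℂ] H₁) (B : H₂ →ₗ[ℂ] H₂),
      A.IsSymmetric → B.IsSymmetric →
      braSchmidt c φ ψ
          (TensorProduct.map A B (∑ i, (c i : ℂ) • (φ i ⊗ₜ[ℂ] ψ i))) =
        braSchmidt c φ ψ
            (TensorProduct.map A LinearMap.id (∑ i, (c i : ℂ) • (φ i ⊗ₜ[ℂ] ψ i))) *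
          braSchmidt c φ ψ
            (TensorProduct.map LinearMap.id B (∑ i, (c i : ℂ) • (φ i ⊗ₜ[ℂ] ψ i)))) :
    c 0 = 1 ∧ (∀ i : Fin (n + 1), i ≠ 0 → c i = 0) ∧
      (∑ i, (c i : ℂ) • (φ i ⊗ₜ[ℂ] ψ i)) = φ 0 ⊗ₜ[ℂ] ψ 0 := by
  have key := hindep _ _ (isSymmetric_rankOne_self (φ 0)) (isSymmetric_rankOne_self (ψ 0))
  rw [hφ.map_rankOne_left_sum_smul_tmul, hφ.map_rankOne_left_sum_smul_tmul,
    hψ.map_rankOne_right_sum_smul_tmul] at key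
  simp only [ContinuousLinearMap.coe_coe, hψ.rankOne_self_apply, if_pos, LinearMap.id_apply,
    map_smul, braSchmidt_tmul_self hφ hψ, smul_eq_mul] at key
  have hpos := zero_lt_apply_zero_of_antitone hc (fun i j h => hdesc i j h) hnorm
  have hc0 : c 0 = 1 := by
    have hsq : c 0 * c 0 = c 0 * c 0 * (c 0 * c 0) := by exact_mod_cast key
    have hsq_one : c 0 * c 0 = 1 := (mul_eq_left₀ (mul_pos hpos hpos).ne').mp hsq.symm
    nlinarith
  have hrest (i : Fin (n + 1)) (hi : i ≠ 0) : c i = 0 :=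
    eq_zero_of_sum_sq_eq_one_of_sq_eq_one hnorm (by rw [hc0, one_pow]) hi
  refine ⟨hc0, hrest, ?_⟩
  rw [Fintype.sum_eq_single 0 fun i hi => by simp [hrest i hi]]
  simp [hc0]

theorem independence_implies_separable
    [FiniteDimensional ℂ H₁] [FiniteDimensional ℂ H₂]
    {n : ℕ} (φ : Fin (n + 1) → H₁) (ψ : Fin (n + 1) → H₂)
    (hφ : Orthonormal ℂ φ) (hψ : Orthonormal ℂ ψ)
    (c : Fin (n + 1) → ℝ) (hc : ∀ i, 0 ≤ c i)
    (hdesc : ∀ i j : Fin (n + 1), i ≤ j → c j ≤ c i)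
    (hnorm : ∑ i, (c i) ^ 2 = 1)
    (hindep : ∀ (A : H₁ →ₗ[ℂ] H₁) (B : H₂ →ₗ[ℂ] H₂),
      A.IsSymmetric → B.IsSymmetric →
      braSchmidt c φ ψ
          (TensorProduct.map A B (∑ i, (c i : ℂ) • (φ i ⊗ₜ[ℂ] ψ i))) =
        braSchmidt c φ ψ
            (TensorProduct.map A LinearMap.id (∑ i, (c i : ℂ) • (φ i ⊗ₜ[ℂ] ψ i))) *
          braSchmidt c φ ψ
            (TensorProduct.map LinearMap.id B (∑ i, (c i : ℂ) • (φ i ⊗ₜ[ℂ] ψ i)))) :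
    c 0 = 1 ∧ (∀ i : Fin (n + 1), i ≠ 0 → c i = 0) ∧
      (∑ i, (c i : ℂ) • (φ i ⊗ₜ[ℂ] ψ i)) = φ 0 ⊗ₜ[ℂ] ψ 0 :=
  independence_implies_separable_general φ ψ hφ hψ c hc hdesc hnorm hindep
end
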